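/- There exists an inverse sequence ([0,1], γ_n) of continuous self-maps of the unit interval whose inverse limit is not homeomorphic to [0,1] nor to a point; for instance, taking every γ_n(t) = |1 − 2t| ('tent-like' full folding map γ(t) = 1 − |2t − 1|), the inverse limit is a compact connected metric space that is not homeomorphic to an arc. -/
import Mathlib

open Set Filter Topology

namespace Stmt16

lemma tent_mem (t : unitInterval) : 1 - |2 * (t : ℝ) - 1| ∈ unitInterval := by
  have h1 := t.2.1; have h2 := t.2.2
  have habs : |2 * (t:ℝ) - 1| ≤ 1 := by rw [abs_le]; constructor <;> nlinarith
  exact ⟨by linarith, by have := abs_nonneg (2 * (t:ℝ) - 1); linarith⟩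

noncomputable def tent : C(unitInterval, unitInterval) where
  toFun t := ⟨1 - |2 * (t : ℝ) - 1|, tent_mem t⟩
  continuous_toFun := by
    apply Continuous.subtype_mk
    exact continuous_const.sub
      ((continuous_const.mul continuous_subtype_val).sub continuous_const).abs

lemma tent_coe (t : unitInterval) : (tent t : ℝ) = 1 - |2 * (t:ℝ) - 1| := rfl

lemma tent_coe_of_le_half (t : unitInterval) (h : (t:ℝ) ≤ 1/2) :
    (tent t : ℝ) = 2 * (t:ℝ) := by
  rw [tent_coe, abs_of_nonpos (by linarith)]; ring

abbrev P := ℕ → unitInterval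

def S : Set P := {x | ∀ n, tent (x (n+1)) = x n}

def C (N : ℕ) : Set P := {x | ∀ n < N, tent (x (n+1)) = x n}

noncomputable def fN (N : ℕ) (x : P) : P := fun k => (⇑tent)^[N - k] (x (max k N))

lemma fN_continuous (N : ℕ) : Continuous (fN N) :=
  continuous_pi fun _ => (tent.continuous.iterate _).comp (continuous_apply _)

lemma fN_eq_of_le (N : ℕ) (x : P) {k : ℕ} (h : k ≤ N) :
    fN N x k = (⇑tent)^[N - k] (x N) := by
  unfold fN; rw [max_eq_right h]

lemma fN_mem (N : ℕ) (x : P) : fN N x ∈ C N := by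
  intro n hn
  rw [fN_eq_of_le N x (Nat.succ_le_of_lt hn), fN_eq_of_le N x hn.le]
  have h : N - n = (N - (n+1)) + 1 := by omega
  rw [h, Function.iterate_succ_apply']

lemma fN_fix {N : ℕ} {x : P} (hx : x ∈ C N) : fN N x = x := by
  funext k
  rcases le_or_gt N k with h | h
  · unfold fN; rw [max_eq_left h, Nat.sub_eq_zero_of_le h]; rfl
  · rw [fN_eq_of_le N x h.le]
    have key : ∀ j k, k + j = N → (⇑tent)^[j] (x N) = x k := by
      intro j
      induction j with
      | zero =>
        intro k hk
        have hkN : k = N := by omega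
        rw [hkN]
        simp
      | succ j ih =>
        intro k hk
        rw [Function.iterate_succ_apply', ih (k+1) (by omega)]
        exact hx k (by omega)
    exact key (N - k) k (by omega)

lemma C_eq_range (N : ℕ) : C N = Set.range (fN N) := by
  ext x
  exact ⟨fun hx => ⟨x, fN_fix hx⟩, fun ⟨y, hy⟩ => hy ▸ fN_mem N y⟩

lemma C_isCompact (N : ℕ) : IsCompact (C N) := by
  rw [C_eq_range]; exact isCompact_range (fN_continuous N)

lemma C_isConnected (N : ℕ) : IsConnected (C N) := by
  rw [C_eq_range]; exact isConnected_range (fN_continuous N)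

lemma C_antitone : Antitone C := fun i j hij x hx n hn => hx n (lt_of_lt_of_le hn hij)

lemma S_eq_iInter : S = ⋂ N, C N := by
  ext x
  simp only [S, C, mem_iInter, mem_setOf_eq]
  exact ⟨fun h N n _ => h n, fun h n => h (n+1) n (by omega)⟩

lemma zero_mem_S : (fun _ => 0 : P) ∈ S := by
  intro n
  apply Subtype.ext
  rw [tent_coe]
  norm_num

lemma S_isClosed : IsClosed S := by
  have h : S = ⋂ n, {x : P | tent (x (n+1)) = x n} := by
    ext x; simp [S, Set.mem_iInter]
  rw [h]
  exact isClosed_iInter fun n =>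
    isClosed_eq (tent.continuous.comp (continuous_apply _)) (continuous_apply _)

lemma S_isPreconnected : IsPreconnected S := by
  intro u v hu hv hcov ⟨p, hpS, hpu⟩ ⟨r, hrS, hrv⟩
  by_contra hne
  rw [Set.not_nonempty_iff_eq_empty] at hne
  have hSsub : ∀ N, S ⊆ C N := by
    intro N x hx n _; exact hx n
  set A := S ∩ u with hA
  set B := S ∩ v with hB
  have hAcl : IsClosed A := by
    have : A = S \ v := by
      ext x
      constructor
      · rintro ⟨hx, hxu⟩
        exact ⟨hx, fun hxv =>
          (Set.eq_empty_iff_forall_notMem.mp hne x) ⟨hx, hxu, hxv⟩⟩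
      · rintro ⟨hx, hxv⟩
        rcases hcov hx with h | h
        · exact ⟨hx, h⟩
        · exact absurd h hxv
    rw [this]
    exact S_isClosed.sdiff hv
  have hBcl : IsClosed B := by
    have : B = S \ u := by
      ext x
      constructor
      · rintro ⟨hx, hxv⟩
        exact ⟨hx, fun hxu =>
          (Set.eq_empty_iff_forall_notMem.mp hne x) ⟨hx, hxu, hxv⟩⟩
      · rintro ⟨hx, hxu⟩
        rcases hcov hx with h | h
        · exact absurd h hxu
        · exact ⟨hx, h⟩
    rw [this]
    exact S_isClosed.sdiff hu
  have hdisj : Disjoint A B := by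
    rw [Set.disjoint_left]
    rintro x ⟨hx, hxu⟩ ⟨_, hxv⟩
    exact (Set.eq_empty_iff_forall_notMem.mp hne x) ⟨hx, hxu, hxv⟩
  obtain ⟨U, V, hUo, hVo, hAU, hBV, hUV⟩ := normal_separation hAcl hBcl hdisj
  set K : ℕ → Set P := fun N => C N \ (U ∪ V) with hK
  have hKne : ∀ N, (K N).Nonempty := by
    intro N
    by_contra hKe
    rw [Set.not_nonempty_iff_eq_empty] at hKe
    have hsub : C N ⊆ U ∪ V := by
      intro x hx
      by_contra hx'
      exact (Set.eq_empty_iff_forall_notMem.mp hKe x) ⟨hx, hx'⟩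
    have h1 : (C N ∩ U).Nonempty := ⟨p, hSsub N hpS, hAU ⟨hpS, hpu⟩⟩
    have h2 : (C N ∩ V).Nonempty := ⟨r, hSsub N hrS, hBV ⟨hrS, hrv⟩⟩
    obtain ⟨x, _, hxU, hxV⟩ := (C_isConnected N).isPreconnected U V hUo hVo hsub h1 h2
    exact Set.disjoint_left.mp hUV hxU hxV
  have hKanti : Antitone K := fun i j hij =>
    Set.diff_subset_diff_left (C_antitone hij)
  have hKd : Directed (· ⊇ ·) K := hKanti.directed_ge
  have hKcl : ∀ N, IsClosed (K N) := fun N =>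
    ((C_isCompact N).isClosed).sdiff (hUo.union hVo)
  have hKc : ∀ N, IsCompact (K N) := fun N =>
    (C_isCompact N).diff (hUo.union hVo)
  obtain ⟨x, hx⟩ :=
    IsCompact.nonempty_iInter_of_directed_nonempty_isCompact_isClosed K hKd hKne hKc hKcl
  rw [Set.mem_iInter] at hx
  have hxS : x ∈ S := by
    rw [S_eq_iInter, Set.mem_iInter]
    exact fun N => (hx N).1
  have hxUV : x ∉ U ∪ V := (hx 0).2
  rcases hcov hxS with h | h
  · exact hxUV (Or.inl (hAU ⟨hxS, h⟩))
  · exact hxUV (Or.inr (hBV ⟨hxS, h⟩))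

/-- The points approximating `0` that have a coordinate equal to `1`. -/
noncomputable def qv (n k : ℕ) : ℝ := if k < n then 0 else (2:ℝ)⁻¹ ^ (k - n)

lemma qv_mem (n k : ℕ) : qv n k ∈ unitInterval := by
  unfold qv
  split_ifs
  · exact ⟨le_refl 0, zero_le_one⟩
  · exact ⟨by positivity, pow_le_one₀ (by norm_num) (by norm_num)⟩

noncomputable def q (n : ℕ) : P := fun k => ⟨qv n k, qv_mem n k⟩

lemma q_mem_S (n : ℕ) : q n ∈ S := by
  intro k
  apply Subtype.ext
  rw [tent_coe]
  show 1 - |2 * qv n (k+1) - 1| = qv n k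
  unfold qv
  rcases lt_trichotomy (k+1) n with h | h | h
  · rw [if_pos h, if_pos (by omega)]; norm_num
  · rw [if_neg (by omega), if_pos (by omega)]
    have : k + 1 - n = 0 := by omega
    rw [this]; norm_num
  · rw [if_neg (by omega), if_neg (by omega)]
    have he : k + 1 - n = (k - n) + 1 := by omega
    rw [he, pow_succ]
    have h4 : (0:ℝ) < (2:ℝ)⁻¹ ^ (k-n) := by positivity
    have h5 : (2:ℝ)⁻¹ ^ (k-n) ≤ 1 := pow_le_one₀ (by norm_num) (by norm_num)
    rw [abs_of_nonpos (by nlinarith)]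
    ring

lemma I_locallyConnected : LocallyConnectedSpace unitInterval := by
  rw [locallyConnectedSpace_iff_connected_subsets]
  intro x U hU
  obtain ⟨b, c, hx, hmem, hsub⟩ := exists_Icc_mem_subset_of_mem_nhds hU
  refine ⟨Icc b c, hmem, ?_, hsub⟩
  rw [← Topology.IsInducing.subtypeVal.isPreconnected_image]
  have himg : (Subtype.val '' Icc b c : Set ℝ) = Icc (b:ℝ) (c:ℝ) := by
    ext y
    constructor
    · rintro ⟨t, ht, rfl⟩
      exact ⟨ht.1, ht.2⟩
    · intro hy
      have hy' : y ∈ unitInterval := ⟨le_trans b.2.1 hy.1, le_trans hy.2 c.2.2⟩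
      exact ⟨⟨y, hy'⟩, ⟨hy.1, hy.2⟩, rfl⟩
  rw [himg]
  exact isPreconnected_Icc

/-- The key estimate: a preconnected set in the inverse limit containing `0`
whose first coordinate stays below `1/2` has `k`-th coordinate below `2⁻ᵏ`. -/
lemma key_lt {T : Set {x : P // x ∈ S}} (hT : IsPreconnected T)
    (haT : (⟨fun _ => 0, zero_mem_S⟩ : {x : P // x ∈ S}) ∈ T)
    (hU : ∀ x ∈ T, ((x.1 1 : ℝ)) < 1/2) :
    ∀ k, 1 ≤ k → ∀ x ∈ T, ((x.1 k : ℝ)) < (2:ℝ)⁻¹ ^ k := by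
  intro k
  induction k with
  | zero => omega
  | succ k ih =>
    intro _ x hx
    rcases Nat.eq_zero_or_pos k with rfl | hk
    · have := hU x hx
      norm_num
      linarith
    by_contra hcon
    push_neg at hcon
    set g : {x : P // x ∈ S} → ℝ := fun y => (y.1 (k+1) : ℝ) with hg
    have hgc : Continuous g :=
      continuous_subtype_val.comp ((continuous_apply (k+1)).comp continuous_subtype_val)
    have himg : IsPreconnected (g '' T) := hT.image g hgc.continuousOn
    have h0 : (0:ℝ) ∈ g '' T := ⟨_, haT, rfl⟩
    have hs : g x ∈ g '' T := ⟨x, hx, rfl⟩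
    have hcc : (2:ℝ)⁻¹ ^ (k+1) ∈ Icc (0:ℝ) (g x) := ⟨by positivity, hcon⟩
    obtain ⟨y, hyT, hgy0⟩ := himg.Icc_subset h0 hs hcc
    have hgy : ((y.1 (k+1) : ℝ)) = (2:ℝ)⁻¹ ^ (k+1) := hgy0
    have hhalf : ((y.1 (k+1) : ℝ)) ≤ 1/2 := by
      rw [hgy]
      calc (2:ℝ)⁻¹ ^ (k+1) ≤ (2:ℝ)⁻¹ ^ 1 :=
        pow_le_pow_of_le_one (by norm_num) (by norm_num) (by omega)
      _ = 1/2 := by norm_num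
    have hyk : ((y.1 k : ℝ)) = (2:ℝ)⁻¹ ^ k := by
      have hcond := y.2 k
      have : ((y.1 k : ℝ)) = (tent (y.1 (k+1)) : ℝ) := by rw [hcond]
      rw [this, tent_coe_of_le_half _ hhalf, hgy, pow_succ]
      ring
    have := ih hk y hyT
    rw [hyk] at this
    exact lt_irrefl _ this

lemma tendsto_q : Tendsto (fun n => q n) atTop (𝓝 (fun _ => 0 : P)) := by
  rw [tendsto_pi_nhds]
  intro k
  apply Tendsto.congr' (f₁ := fun _ => (0 : unitInterval))
  · rw [Filter.eventuallyEq_iff_exists_mem]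
    refine ⟨Set.Ioi k, Ioi_mem_atTop k, fun n hn => ?_⟩
    apply Subtype.ext
    show (0:ℝ) = qv n k
    unfold qv
    rw [if_pos (show k < n from hn)]
  · exact tendsto_const_nhds

end Stmt16

/-- There is an inverse sequence of continuous surjections of `[0,1]` — namely
the tent maps `γ n (t) = 1 - |2t - 1|` — whose inverse limit is a compact
connected (metrizable) space that is homeomorphic neither to `[0,1]` nor to a
point. -/
theorem stmt_16 :
    ∃ γ : ℕ → C(unitInterval, unitInterval),
      (∀ n (t : unitInterval), ((γ n t : ℝ)) = 1 - |2 * (t : ℝ) - 1|) ∧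
      (∀ n, Function.Surjective (γ n)) ∧
      CompactSpace {x : ℕ → unitInterval // ∀ n, γ n (x (n + 1)) = x n} ∧
      ConnectedSpace {x : ℕ → unitInterval // ∀ n, γ n (x (n + 1)) = x n} ∧
      ¬ Nonempty
        ({x : ℕ → unitInterval // ∀ n, γ n (x (n + 1)) = x n} ≃ₜ unitInterval) ∧
      ¬ Subsingleton {x : ℕ → unitInterval // ∀ n, γ n (x (n + 1)) = x n} := by
  refine ⟨fun _ => Stmt16.tent, fun n t => rfl, ?_, ?_, ?_, ?_, ?_⟩
  · -- surjectivity
    intro n y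
    refine ⟨⟨(y:ℝ)/2, ⟨by have := y.2.1; linarith, by have := y.2.2; linarith⟩⟩, ?_⟩
    apply Subtype.ext
    rw [Stmt16.tent_coe]
    have h1 := y.2.1; have h2 := y.2.2
    show 1 - |2 * ((y:ℝ)/2) - 1| = (y:ℝ)
    rw [abs_of_nonpos (by linarith)]
    ring
  · exact isCompact_iff_compactSpace.mp (Stmt16.S_isClosed.isCompact)
  · exact Subtype.connectedSpace ⟨⟨fun _ => 0, Stmt16.zero_mem_S⟩, Stmt16.S_isPreconnected⟩
  · rintro ⟨h⟩
    haveI : LocallyConnectedSpace unitInterval := Stmt16.I_locallyConnected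
    haveI hX := h.locallyConnectedSpace
    set X := {x : Stmt16.P // x ∈ Stmt16.S}
    set a : X := ⟨fun _ => 0, Stmt16.zero_mem_S⟩ with ha
    set Us : Set X := {x | ((x.1 1 : ℝ)) < 1/2} with hUs
    have hUso : IsOpen Us := by
      have : Us = (fun x : X => ((x.1 1 : ℝ))) ⁻¹' (Iio (1/2)) := rfl
      rw [this]
      exact (continuous_subtype_val.comp
        ((continuous_apply 1).comp continuous_subtype_val)).isOpen_preimage _ isOpen_Iio
    have hUn : Us ∈ 𝓝 a := hUso.mem_nhds (by norm_num [hUs, ha])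
    obtain ⟨V, hV, hVconn, hVsub⟩ :=
      locallyConnectedSpace_iff_connected_subsets.mp hX a Us hUn
    have hQt : Tendsto (fun n => (⟨Stmt16.q n, Stmt16.q_mem_S n⟩ : X)) atTop (𝓝 a) := by
      rw [tendsto_subtype_rng]
      exact Stmt16.tendsto_q
    obtain ⟨n, hnV, hn1⟩ := ((hQt.eventually hV).and (eventually_ge_atTop 1)).exists
    have haV : a ∈ V := mem_of_mem_nhds hV
    have := Stmt16.key_lt hVconn haV (fun x hx => hVsub hx) n hn1 _ hnV
    have h1 : ((Stmt16.q n n : ℝ)) = 1 := by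
      show Stmt16.qv n n = 1
      unfold Stmt16.qv
      rw [if_neg (by omega)]
      simp
    rw [h1] at this
    have : (2:ℝ)⁻¹ ^ n ≤ 1 := pow_le_one₀ (by norm_num) (by norm_num)
    linarith
  · intro h
    have heq := h.elim ⟨fun _ => 0, Stmt16.zero_mem_S⟩ ⟨Stmt16.q 0, Stmt16.q_mem_S 0⟩
    have := congrArg (fun z : {x : Stmt16.P // x ∈ Stmt16.S} => ((z.1 0 : ℝ))) heq
    simp only at this
    have h1 : ((Stmt16.q 0 0 : ℝ)) = 1 := by
      show Stmt16.qv 0 0 = 1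
      unfold Stmt16.qv
      rw [if_neg (by omega)]
      simp
    rw [h1] at this
    norm_num at this
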